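/- There exists a constant c > 0 such that for every n ≥ 1 and every x ∈ V_n∖V₀, the diagonal of the Green function is uniformly bounded: G_n(x,x) ≤ c. -/

import Mathlib

open scoped Classical
open Real Set

noncomputable section

abbrev Pt : Type := ℝ × ℝ

/-- The three corners of the unit triangle. -/
def sierA : Fin 3 → Pt
  | 0 => (0, 0)
  | 1 => (1 / 2, Real.sqrt 3 / 2)
  | 2 => (1, 0)

/-- The three contractions `φᵢ(x) = (x + aᵢ)/2`. -/
def ctr (i : Fin 3) (x : Pt) : Pt :=
  ((x.1 + (sierA i).1) / 2, (x.2 + (sierA i).2) / 2)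

/-- The vertex sets `V n`. -/
def V : ℕ → Finset Pt
  | 0 => {sierA 0, sierA 1, sierA 2}
  | n + 1 => (V n).image (ctr 0) ∪ (V n).image (ctr 1) ∪ (V n).image (ctr 2)

/-- The (ordered) edge sets: `(x, y) ∈ Ed n` iff `{x,y} ∈ E_n`; each undirected
edge appears with both orientations. -/
def Ed : ℕ → Finset (Pt × Pt)
  | 0 => (V 0 ×ˢ V 0).filter fun p => p.1 ≠ p.2
  | n + 1 => Finset.univ.biUnion fun i : Fin 3 => (Ed n).image fun p => (ctr i p.1, ctr i p.2)

/-- `V* = ⋃ n, V n`. -/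
def Vstar : Set Pt := ⋃ n, (V n : Set Pt)

/-- The level-`n` energy `E_n(u,u) = (5/3)^n Σ_{{x,y} ∈ E_n} (u y - u x)²`
(each undirected edge counted once, whence the division by 2). -/
def En (n : ℕ) (u : Pt → ℝ) : ℝ :=
  (5 / 3 : ℝ) ^ n * (∑ p ∈ Ed n, (u p.2 - u p.1) ^ 2) / 2

/-- The discrete Laplacian `Δ_n u (x) = 5^n Σ_{y ∼ₙ x} (u y - u x)`. -/
def lap (n : ℕ) (u : Pt → ℝ) (x : Pt) : ℝ :=
  (5 : ℝ) ^ n * ∑ p ∈ (Ed n).filter (fun p => p.1 = x), (u p.2 - u p.1)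

/-- `g` is the level-`n` Green function with pole at `y`: it solves the
discrete Dirichlet problem `Δ_n g (y) = −3^n`, `Δ_n g (x) = 0` for
`x ∈ V_n ∖ (V₀ ∪ {y})`, and `g = 0` on `V₀ = {a₀,a₁,a₂}`. -/
def IsGreen (n : ℕ) (y : Pt) (g : Pt → ℝ) : Prop :=
  lap n g y = -(3 : ℝ) ^ n ∧
  (∀ x ∈ (V n : Set Pt), x ∉ (V 0 : Set Pt) → x ≠ y → lap n g x = 0) ∧
  ∀ i : Fin 3, g (sierA i) = 0

/-!
The Gauss–Green identity `∑ₓ g x · Δₙ g x = -3ⁿ Eₙ(g)` turns the defining equations of the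
Green function `g` with pole `x` into `Eₙ(g) = g x`. The renormalized energy `Eₙ` is
nondecreasing in `n`: it is self-similar, `Eₙ₊₁(u) = 5/3 ∑ᵢ Eₙ(u ∘ φᵢ)`, and on a single
triangle the squared differences along the nine subedges add up to at least `3/5` of those
along the three edges, with equality for the harmonic extension (the "2-2-1 rule"). Hence an
edge of level `k` carries a difference `|u y - u z| ≤ 3/2 (4/5)ᵏ √Eₙ(u)`. Every vertex is
reached from `V₀` by a chain using at most one edge of each level, so a function vanishing on
`V₀` satisfies `|u x| ≤ 6 √Eₙ(u)`. For `u = g` this reads `g x ≤ 6 √(g x)`, so `g x ≤ 36`.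
-/

lemma ctr_sierA_self (i : Fin 3) : ctr i (sierA i) = sierA i := by
  fin_cases i <;> ext <;> simp [ctr, sierA]

lemma ctr_sierA_comm (i j : Fin 3) : ctr i (sierA j) = ctr j (sierA i) := by
  fin_cases i <;> fin_cases j <;> ext <;> simp [ctr, sierA] <;> ring

lemma ctr_injective (i : Fin 3) : Function.Injective (ctr i) := by
  intro x y h
  simp only [ctr, Prod.mk.injEq] at h
  ext <;> linarith [h.1, h.2]

lemma sierA_injective : Function.Injective sierA := by
  intro i j h
  fin_cases i <;> fin_cases j <;> simp_all [sierA, Prod.ext_iff]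

lemma V_zero_eq : V 0 = Finset.univ.image sierA := by
  ext x
  simp [V, Fin.exists_fin_succ, eq_comm]

lemma mem_V_zero {x : Pt} : x ∈ V 0 ↔ ∃ i, sierA i = x := by
  simp [V_zero_eq]

lemma mem_V_succ {n : ℕ} {x : Pt} : x ∈ V (n + 1) ↔ ∃ i, ∃ y ∈ V n, ctr i y = x := by
  simp [V, Fin.exists_fin_succ]

lemma mem_Ed_zero {p : Pt × Pt} : p ∈ Ed 0 ↔ p.1 ∈ V 0 ∧ p.2 ∈ V 0 ∧ p.1 ≠ p.2 := by
  simp [Ed, and_assoc]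

lemma mem_Ed_succ {n : ℕ} {p : Pt × Pt} :
    p ∈ Ed (n + 1) ↔ ∃ i, ∃ q ∈ Ed n, (ctr i q.1, ctr i q.2) = p := by
  simp [Ed]

lemma mem_V_of_mem_Ed {n : ℕ} {p : Pt × Pt} (hp : p ∈ Ed n) : p.1 ∈ V n ∧ p.2 ∈ V n := by
  induction n generalizing p with
  | zero => exact ⟨(mem_Ed_zero.1 hp).1, (mem_Ed_zero.1 hp).2.1⟩
  | succ n ih =>
    obtain ⟨i, q, hq, rfl⟩ := mem_Ed_succ.1 hp
    exact ⟨mem_V_succ.2 ⟨i, q.1, (ih hq).1, rfl⟩, mem_V_succ.2 ⟨i, q.2, (ih hq).2, rfl⟩⟩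

lemma swap_mem_Ed {n : ℕ} {p : Pt × Pt} (hp : p ∈ Ed n) : p.swap ∈ Ed n := by
  induction n generalizing p with
  | zero =>
    obtain ⟨h1, h2, hne⟩ := mem_Ed_zero.1 hp
    exact mem_Ed_zero.2 ⟨h2, h1, hne.symm⟩
  | succ n ih =>
    obtain ⟨i, q, hq, rfl⟩ := mem_Ed_succ.1 hp
    exact mem_Ed_succ.2 ⟨i, q.swap, ih hq, rfl⟩

lemma fst_ne_snd_of_mem_Ed {n : ℕ} {p : Pt × Pt} (hp : p ∈ Ed n) : p.1 ≠ p.2 := by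
  induction n generalizing p with
  | zero => exact (mem_Ed_zero.1 hp).2.2
  | succ n ih =>
    obtain ⟨i, q, hq, rfl⟩ := mem_Ed_succ.1 hp
    exact fun h => ih hq (ctr_injective i h)

lemma exists_adj_of_mem_V_succ {n : ℕ} {y : Pt} (hy : y ∈ V (n + 1)) :
    ∃ z ∈ V n, z = y ∨ (z, y) ∈ Ed (n + 1) := by
  obtain ⟨i, w, hw, rfl⟩ := mem_V_succ.1 hy
  clear hy
  induction n generalizing i w with
  | zero =>
    refine ⟨sierA i, mem_V_zero.2 ⟨i, rfl⟩, ?_⟩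
    by_cases hwi : sierA i = w
    · exact Or.inl (by rw [← hwi, ctr_sierA_self])
    · refine Or.inr (mem_Ed_succ.2 ⟨i, (sierA i, w), ?_, by simp [ctr_sierA_self]⟩)
      exact mem_Ed_zero.2 ⟨mem_V_zero.2 ⟨i, rfl⟩, hw, hwi⟩
  | succ n ih =>
    obtain ⟨j, v, hv, rfl⟩ := mem_V_succ.1 hw
    obtain ⟨z, hz, hzv | he⟩ := ih j v hv
    · exact ⟨ctr i z, mem_V_succ.2 ⟨i, z, hz, rfl⟩, Or.inl (by rw [hzv])⟩
    · exact ⟨ctr i z, mem_V_succ.2 ⟨i, z, hz, rfl⟩, Or.inr (mem_Ed_succ.2 ⟨i, _, he, rfl⟩)⟩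

def InTri (x : Pt) : Prop :=
  0 ≤ x.2 ∧ x.2 ≤ √3 * x.1 ∧ √3 * x.1 + x.2 ≤ √3

lemma inTri_of_mem_V {n : ℕ} {x : Pt} (hx : x ∈ V n) : InTri x := by
  have hs : 0 < √3 := by positivity
  induction n generalizing x with
  | zero =>
    obtain ⟨i, rfl⟩ := mem_V_zero.1 hx
    fin_cases i <;> refine ⟨?_, ?_, ?_⟩ <;> norm_num [sierA] <;> linarith
  | succ n ih =>
    obtain ⟨i, y, hy, rfl⟩ := mem_V_succ.1 hx
    obtain ⟨h1, h2, h3⟩ := ih hy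
    fin_cases i <;> refine ⟨?_, ?_, ?_⟩ <;> simp [ctr, sierA] <;>
      nlinarith [Real.mul_self_sqrt (show (0 : ℝ) ≤ 3 by norm_num)]

lemma eq_sierA_of_ctr_eq_ctr {i j : Fin 3} (hij : i ≠ j) {p q : Pt} (hp : InTri p)
    (hq : InTri q) (h : ctr i p = ctr j q) : p = sierA j := by
  have hs : 0 < √3 := by positivity
  obtain ⟨hp1, hp2, hp3⟩ := hp
  obtain ⟨hq1, hq2, hq3⟩ := hq
  simp only [ctr, Prod.ext_iff] at h
  obtain ⟨h1, h2⟩ := h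
  fin_cases i <;> fin_cases j <;> simp only [sierA] at h1 h2 ⊢ <;>
    first | exact absurd rfl hij | (ext <;> dsimp only <;> nlinarith)

lemma Ed_image_disjoint (n : ℕ) {i j : Fin 3} (hij : i ≠ j) :
    Disjoint ((Ed n).image fun p => (ctr i p.1, ctr i p.2))
      ((Ed n).image fun p => (ctr j p.1, ctr j p.2)) := by
  rw [Finset.disjoint_left]
  rintro _ hpi hpj
  obtain ⟨p, hp, rfl⟩ := Finset.mem_image.1 hpi
  obtain ⟨q, hq, he⟩ := Finset.mem_image.1 hpj
  simp only [Prod.mk.injEq] at he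
  have hpV := mem_V_of_mem_Ed hp
  have hqV := mem_V_of_mem_Ed hq
  have h1 := eq_sierA_of_ctr_eq_ctr hij (inTri_of_mem_V hpV.1) (inTri_of_mem_V hqV.1) he.1.symm
  have h2 := eq_sierA_of_ctr_eq_ctr hij (inTri_of_mem_V hpV.2) (inTri_of_mem_V hqV.2) he.2.symm
  exact fst_ne_snd_of_mem_Ed hp (h1.trans h2.symm)

lemma En_nonneg (n : ℕ) (u : Pt → ℝ) : 0 ≤ En n u := by
  unfold En
  have := Finset.sum_nonneg fun (p : Pt × Pt) (_ : p ∈ Ed n) => sq_nonneg (u p.2 - u p.1)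
  positivity

lemma En_succ (n : ℕ) (u : Pt → ℝ) : En (n + 1) u = 5 / 3 * ∑ i, En n (u ∘ ctr i) := by
  have hsum : ∑ p ∈ Ed (n + 1), (u p.2 - u p.1) ^ 2
      = ∑ i, ∑ p ∈ Ed n, ((u ∘ ctr i) p.2 - (u ∘ ctr i) p.1) ^ 2 := by
    rw [Ed, Finset.sum_biUnion fun i _ j _ hij => Ed_image_disjoint n hij]
    refine Finset.sum_congr rfl fun i _ => Finset.sum_image ?_
    exact fun p _ q _ h => (ctr_injective i).prodMap (ctr_injective i) h
  rw [En, hsum, pow_succ (5 / 3 : ℝ) n]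
  simp only [En, Finset.mul_sum, Finset.sum_div]
  exact Finset.sum_congr rfl fun i _ => Finset.sum_congr rfl fun p _ => by ring

lemma En_zero (u : Pt → ℝ) :
    En 0 u = (u (sierA 1) - u (sierA 0)) ^ 2 + (u (sierA 2) - u (sierA 1)) ^ 2
      + (u (sierA 0) - u (sierA 2)) ^ 2 := by
  rw [En, Ed, Finset.sum_filter, Finset.sum_product, V_zero_eq]
  simp [Finset.sum_image fun _ _ _ _ h => sierA_injective h, Fin.sum_univ_three,
    sierA_injective.eq_iff]
  ring

/-- Choosing the midpoint values `m01, m02, m12` by the harmonic extension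
`mᵢⱼ = (2 xᵢ + 2 xⱼ + xₖ) / 5` minimizes the right-hand side and gives equality. -/
lemma triangle_energy_le_subdivided (x0 x1 x2 m01 m02 m12 : ℝ) :
    (x1 - x0) ^ 2 + (x2 - x1) ^ 2 + (x0 - x2) ^ 2 ≤
      5 / 3 * (((m01 - x0) ^ 2 + (m02 - m01) ^ 2 + (x0 - m02) ^ 2)
        + ((x1 - m01) ^ 2 + (m12 - x1) ^ 2 + (m01 - m12) ^ 2)
        + ((m12 - m02) ^ 2 + (x2 - m12) ^ 2 + (m02 - x2) ^ 2)) := by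
  nlinarith [sq_nonneg (5 * m01 - 2 * x0 - 2 * x1 - x2), sq_nonneg (5 * m01 - 5 * m02 - x1 + x2),
    sq_nonneg (5 * m02 - 2 * x0 - x1 - 2 * x2), sq_nonneg (5 * m01 - 5 * m12 - x0 + x2),
    sq_nonneg (5 * m12 - x0 - 2 * x1 - 2 * x2), sq_nonneg (5 * m02 - 5 * m12 - x0 + x1)]

lemma En_zero_le_En_one (u : Pt → ℝ) : En 0 u ≤ En 1 u := by
  rw [En_succ]
  simp only [Fin.sum_univ_three, En_zero, Function.comp_apply, ctr_sierA_self]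
  rw [ctr_sierA_comm 1 0, ctr_sierA_comm 2 0, ctr_sierA_comm 2 1]
  exact triangle_energy_le_subdivided _ _ _ _ _ _

lemma En_le_En_succ (n : ℕ) (u : Pt → ℝ) : En n u ≤ En (n + 1) u := by
  induction n generalizing u with
  | zero => exact En_zero_le_En_one u
  | succ n ih =>
    rw [En_succ (n + 1), En_succ n]
    gcongr with i
    exact ih _

lemma sq_sub_le_of_mem_Ed {n : ℕ} {p : Pt × Pt} (hp : p ∈ Ed n) (u : Pt → ℝ) :
    (u p.2 - u p.1) ^ 2 ≤ 2 * (3 / 5) ^ n * En n u :=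
  calc (u p.2 - u p.1) ^ 2 ≤ ∑ q ∈ Ed n, (u q.2 - u q.1) ^ 2 :=
        Finset.single_le_sum (f := fun q : Pt × Pt => (u q.2 - u q.1) ^ 2)
          (fun q _ => sq_nonneg _) hp
    _ = 2 * (3 / 5) ^ n * En n u := by
        rw [En, div_pow, div_pow]
        field_simp

/-- `4/5` is a rational upper bound for `√(3/5)`. -/
lemma abs_sub_le_of_mem_Ed {n : ℕ} {p : Pt × Pt} (hp : p ∈ Ed n) (u : Pt → ℝ) :
    |u p.2 - u p.1| ≤ 3 / 2 * (4 / 5) ^ n * √(En n u) := by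
  have hc : 2 * (3 / 5 : ℝ) ^ n ≤ (3 / 2 * (4 / 5) ^ n) ^ 2 :=
    calc 2 * (3 / 5 : ℝ) ^ n ≤ 9 / 4 * (16 / 25) ^ n :=
        mul_le_mul (by norm_num) (pow_le_pow_left₀ (by norm_num) (by norm_num) n) (by positivity)
          (by norm_num)
      _ = (3 / 2 * (4 / 5) ^ n) ^ 2 := by rw [mul_pow, ← pow_mul, mul_comm n, pow_mul]; norm_num
  calc |u p.2 - u p.1| ≤ √((3 / 2 * (4 / 5) ^ n) ^ 2 * En n u) :=
        Real.abs_le_sqrt ((sq_sub_le_of_mem_Ed hp u).trans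
          (mul_le_mul_of_nonneg_right hc (En_nonneg n u)))
    _ = 3 / 2 * (4 / 5) ^ n * √(En n u) := by
        rw [Real.sqrt_mul (sq_nonneg _), Real.sqrt_sq (by positivity)]

lemma abs_le_of_forall_sierA_eq_zero {u : Pt → ℝ} (hu : ∀ i, u (sierA i) = 0) :
    ∀ n, ∀ y ∈ V n, |u y| ≤ 6 * (1 - (4 / 5 : ℝ) ^ n) * √(En n u)
  | 0, y, hy => by
    obtain ⟨i, rfl⟩ := mem_V_zero.1 hy
    simp [hu]
  | n + 1, y, hy => by
    obtain ⟨z, hz, hzy⟩ := exists_adj_of_mem_V_succ hy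
    have hstep : |u y - u z| ≤ 3 / 2 * (4 / 5) ^ (n + 1) * √(En (n + 1) u) := by
      rcases hzy with rfl | he
      · rw [sub_self, abs_zero]
        positivity
      · exact abs_sub_le_of_mem_Ed he u
    have hfactor : 0 ≤ 1 - (4 / 5 : ℝ) ^ n :=
      sub_nonneg.2 (pow_le_one₀ (by norm_num) (by norm_num))
    calc |u y| ≤ |u z| + |u y - u z| := by linarith [abs_sub_abs_le_abs_sub (u y) (u z)]
      _ ≤ 6 * (1 - (4 / 5) ^ n) * √(En n u) + 3 / 2 * (4 / 5) ^ (n + 1) * √(En (n + 1) u) :=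
        add_le_add (abs_le_of_forall_sierA_eq_zero hu n z hz) hstep
      _ ≤ 6 * (1 - (4 / 5) ^ n) * √(En (n + 1) u)
          + 3 / 2 * (4 / 5) ^ (n + 1) * √(En (n + 1) u) := by
        gcongr
        exact En_le_En_succ n u
      _ = 6 * (1 - (4 / 5) ^ (n + 1)) * √(En (n + 1) u) := by ring

lemma abs_le_six_mul_sqrt_En {u : Pt → ℝ} (hu : ∀ i, u (sierA i) = 0) {n : ℕ} {y : Pt}
    (hy : y ∈ V n) : |u y| ≤ 6 * √(En n u) := by
  refine (abs_le_of_forall_sierA_eq_zero hu n y hy).trans ?_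
  gcongr
  linarith [pow_nonneg (show (0 : ℝ) ≤ 4 / 5 by norm_num) n]

lemma sum_mul_lap (n : ℕ) (u : Pt → ℝ) : ∑ x ∈ V n, u x * lap n u x = -3 ^ n * En n u := by
  have hfib : ∑ x ∈ V n, u x * lap n u x = 5 ^ n * ∑ p ∈ Ed n, u p.1 * (u p.2 - u p.1) := by
    rw [← Finset.sum_fiberwise_of_maps_to fun p hp => (mem_V_of_mem_Ed hp).1, Finset.mul_sum]
    refine Finset.sum_congr rfl fun x _ => ?_
    rw [lap, Finset.mul_sum, Finset.mul_sum, Finset.mul_sum]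
    refine Finset.sum_congr rfl fun p hp => ?_
    rw [(Finset.mem_filter.1 hp).2]
    ring
  have hswap : ∑ p ∈ Ed n, u p.1 * (u p.2 - u p.1) = ∑ p ∈ Ed n, u p.2 * (u p.1 - u p.2) :=
    Finset.sum_nbij' Prod.swap Prod.swap (fun _ hp => swap_mem_Ed hp)
      (fun _ hp => swap_mem_Ed hp) (fun _ _ => rfl) (fun _ _ => rfl) (fun _ _ => rfl)
  have hsq : ∑ p ∈ Ed n, (u p.2 - u p.1) ^ 2 = -2 * ∑ p ∈ Ed n, u p.1 * (u p.2 - u p.1) := by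
    have : ∑ p ∈ Ed n, (u p.2 - u p.1) ^ 2 = -(∑ p ∈ Ed n, u p.1 * (u p.2 - u p.1)
        + ∑ p ∈ Ed n, u p.2 * (u p.1 - u p.2)) := by
      rw [← Finset.sum_add_distrib, ← Finset.sum_neg_distrib]
      exact Finset.sum_congr rfl fun p _ => by ring
    rw [this, ← hswap]
    ring
  rw [hfib, En, hsq, div_pow]
  field_simp

lemma IsGreen.En_eq {n : ℕ} {y : Pt} {g : Pt → ℝ} (hG : IsGreen n y g) (hy : y ∈ V n) :
    En n g = g y := by
  obtain ⟨hpole, hharm, hbdry⟩ := hG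
  have hsum : ∑ x ∈ V n, g x * lap n g x = g y * lap n g y := by
    refine Finset.sum_eq_single_of_mem y hy fun x hx hxy => ?_
    by_cases hx0 : x ∈ V 0
    · obtain ⟨i, rfl⟩ := mem_V_zero.1 hx0
      rw [hbdry, zero_mul]
    · rw [hharm x hx hx0 hxy, mul_zero]
  have hid := sum_mul_lap n g
  rw [hsum, hpole] at hid
  exact mul_left_cancel₀ (pow_ne_zero n three_ne_zero) (by linarith)

/-- The diagonal of the Green function is uniformly bounded: there is `c > 0`
such that `G_n(x,x) ≤ c` for all `n ≥ 1` and all `x ∈ V_n ∖ V₀`. -/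
theorem green_diagonal_uniformly_bounded :
    ∃ c : ℝ, 0 < c ∧
      ∀ n : ℕ, 1 ≤ n →
        ∀ x ∈ (V n : Set Pt), x ∉ (V 0 : Set Pt) →
          ∀ g : Pt → ℝ, IsGreen n x g → g x ≤ c := by
  refine ⟨36, by norm_num, fun n _ x hx _ g hG => ?_⟩
  have hE : En n g = g x := hG.En_eq hx
  have hbound : |g x| ≤ 6 * √(g x) := hE ▸ abs_le_six_mul_sqrt_En hG.2.2 hx
  have hsq : √(g x) ^ 2 = g x := Real.sq_sqrt (hE ▸ En_nonneg n g)
  nlinarith [le_abs_self (g x), Real.sqrt_nonneg (g x)]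

end
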